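/- arXiv:2103.17170 — 2 statements merged into one kernel-verified Lean document; each statement's English description precedes it below -/
import Mathlib

section
/- In the Coxeter group with generators ρ₀, ρ₁, ρ₂ of order 2 satisfying (ρ₀ρ₂)² = 1, for every j ≥ 2 the relation (ρ₀ρ₁(ρ₂ρ₁)^{j-1})⁴ = 1 holds if and only if ((ρ₀ρ₁ρ₀ρ₂)^{j-1}·ρ₀ρ₁ρ₀·ρ₁(ρ₂ρ₁)^{j-1})² = 1, i.e. setting ρ̃₀ := ρ₀ρ₁ρ₀ one has (ρ₀ρ₁(ρ₂ρ₁)^{j-1})⁴ = ((ρ̃₀ρ₂)^{j-1}ρ̃₀ρ₁(ρ₂ρ₁)^{j-1})². -/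
/-! Since `ρ₀` is an involution commuting with `ρ₂`, conjugation by `ρ₀` gives
`(ρ̃₀ρ₂)^k = ρ₀(ρ₁ρ₂)^kρ₀`, and `(ρ₁ρ₂)^kρ₁ = ρ₁(ρ₂ρ₁)^k` in any group. Together these collapse
`(ρ̃₀ρ₂)^k ρ̃₀ ρ₁ (ρ₂ρ₁)^k` to `w²` with `w = ρ₀ρ₁(ρ₂ρ₁)^k`, so both sides equal `w⁴`. -/

section Involutions

variable {G : Type*} [Group G] {a b c : G}

theorem inv_eq_self_of_sq_eq_one (ha : a ^ 2 = 1) : a⁻¹ = a :=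
  inv_eq_of_mul_eq_one_right (by rwa [← sq])

theorem commute_of_sq_eq_one (ha : a ^ 2 = 1) (hb : b ^ 2 = 1) (hab : (a * b) ^ 2 = 1) :
    Commute a b :=
  calc a * b = (a * b)⁻¹ := (inv_eq_self_of_sq_eq_one hab).symm
    _ = b * a := by rw [mul_inv_rev, inv_eq_self_of_sq_eq_one ha, inv_eq_self_of_sq_eq_one hb]

theorem conj_mul_pow_of_commute (ha : a ^ 2 = 1) (hac : Commute a c) (k : ℕ) :
    (a * b * a * c) ^ k = a * (b * c) ^ k * a := by
  have hconj : a * b * a * c = a * (b * c) * a⁻¹ := by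
    rw [inv_eq_self_of_sq_eq_one ha, mul_assoc (a * b), hac.eq]
    group
  rw [hconj, conj_pow, inv_eq_self_of_sq_eq_one ha]

theorem conj_mul_pow_mul_conj_mul_mul_pow_eq_sq (ha : a ^ 2 = 1) (hac : Commute a c) (k : ℕ) :
    (a * b * a * c) ^ k * (a * b * a) * b * (c * b) ^ k = (a * b * (c * b) ^ k) ^ 2 := by
  have haa : ∀ x : G, a * (a * x) = x := fun x => by rw [← mul_assoc, ← sq, ha, one_mul]
  calc (a * b * a * c) ^ k * (a * b * a) * b * (c * b) ^ k
      = a * ((b * c) ^ k * b) * (a * b * (c * b) ^ k) := by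
        rw [conj_mul_pow_of_commute ha hac]
        simp only [mul_assoc, haa]
    _ = (a * b * (c * b) ^ k) ^ 2 := by
        rw [mul_pow_mul, sq]
        simp only [mul_assoc]

end Involutions

theorem stmt0_general {G : Type*} [Group G] (ρ₀ ρ₁ ρ₂ : G)
    (h0 : ρ₀ ^ 2 = 1) (h2 : ρ₂ ^ 2 = 1)
    (hc : (ρ₀ * ρ₂) ^ 2 = 1) (j : ℕ) :
    (ρ₀ * ρ₁ * (ρ₂ * ρ₁) ^ (j - 1)) ^ 4 =
      (((ρ₀ * ρ₁ * ρ₀) * ρ₂) ^ (j - 1) * (ρ₀ * ρ₁ * ρ₀) * ρ₁ * (ρ₂ * ρ₁) ^ (j - 1)) ^ 2 := by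
  rw [conj_mul_pow_mul_conj_mul_mul_pow_eq_sq h0 (commute_of_sq_eq_one h0 h2 hc), ← pow_mul]

/-- In a group generated by involutions `ρ₀, ρ₁, ρ₂` with `(ρ₀ρ₂)² = 1`, for every `j ≥ 2`,
setting `ρ̃₀ := ρ₀ρ₁ρ₀`, one has
`(ρ₀ρ₁(ρ₂ρ₁)^{j-1})⁴ = ((ρ̃₀ρ₂)^{j-1} ρ̃₀ ρ₁ (ρ₂ρ₁)^{j-1})²`. -/
theorem stmt0 {G : Type*} [Group G] (ρ₀ ρ₁ ρ₂ : G)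
    (h0 : ρ₀ ^ 2 = 1) (h1 : ρ₁ ^ 2 = 1) (h2 : ρ₂ ^ 2 = 1)
    (hc : (ρ₀ * ρ₂) ^ 2 = 1) (j : ℕ) (hj : 2 ≤ j) :
    (ρ₀ * ρ₁ * (ρ₂ * ρ₁) ^ (j - 1)) ^ 4 =
      (((ρ₀ * ρ₁ * ρ₀) * ρ₂) ^ (j - 1) * (ρ₀ * ρ₁ * ρ₀) * ρ₁ * (ρ₂ * ρ₁) ^ (j - 1)) ^ 2 :=
  stmt0_general ρ₀ ρ₁ ρ₂ h0 h2 hc j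
end

section
/- The group [4, 2p | 4^{p-2}, 2s], defined as the quotient of the Coxeter group [4,2p] by the relations (ρ₀ρ₁(ρ₂ρ₁)^{j-1})⁴ = 1 for 2 ≤ j ≤ p−1 and (ρ₀ρ₁(ρ₂ρ₁)^{p-1})^{2s} = 1, is isomorphic to D_s^p ⋊ D_{2p} and has order (2s)^p · 4p. -/
/-- The defining relators of the group `[4, 2p | 4^{p-2}, 2s]`: the Coxeter relations of
`[4,2p]` together with `(ρ₀ρ₁(ρ₂ρ₁)^{j-1})⁴` for `2 ≤ j ≤ p−1` and
`(ρ₀ρ₁(ρ₂ρ₁)^{p-1})^{2s}`. -/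
def relsStmt11 (p s : ℕ) : Set (FreeGroup (Fin 3)) :=
  letI a := FreeGroup.of (0 : Fin 3)
  letI b := FreeGroup.of (1 : Fin 3)
  letI c := FreeGroup.of (2 : Fin 3)
  {a ^ 2, b ^ 2, c ^ 2, (a * b) ^ 4, (b * c) ^ (2 * p), (a * c) ^ 2,
      (a * b * (c * b) ^ (p - 1)) ^ (2 * s)} ∪
    (fun j => (a * b * (c * b) ^ (j - 1)) ^ 4) '' {j | 2 ≤ j ∧ j ≤ p - 1}

/-!
Label the vertices of the `2p`-gon by `ZMod (2p)`, with `D_{2p}` acting on them. In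
`D_s^p ⋊ D_{2p}`, send `ρ₁, ρ₂` to the reflections `sr 1, sr 0` of `D_{2p}` and `ρ₀` to the
reflection `sr 0` of the factor at vertex `0`. Transporting it around the polygon puts a reflection
at every vertex. The reflections at `u` and `u + p` generate one factor `D_s`, and when the factor
is read from `u + p` its two generators are swapped. Reflections in different factors commute.

In the presented group, let `a_u` be the conjugate of `ρ₀` at vertex `u` under the dihedral
subgroup `⟨ρ₁, ρ₂⟩`. Since `ρ₀ρ₁(ρ₂ρ₁)^{j-1}` squares to `a₀ a_j`, the relators say exactly that
`a₀` commutes with `a_j` for `0 < j < p` and that `(a₀ a_p)^s = 1`. Every pair of distinct,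
non-antipodal vertices is carried to such a pair `(0, j)` by `D_{2p}`, so the `a_u` satisfy the
relations of `D_s^p`, compatibly with the conjugation action. This gives a homomorphism back. Both
composites fix the generators, so the two groups are isomorphic and the order is `(2s)^p · 4p`.
-/

open DihedralGroup

section Involutions

variable {H : Type*} [Group H]

lemma mul_pow_mul_eq_mul_pow_inv {x y : H} (hx : x * x = 1) (hy : y * y = 1) (m : ℕ) :
    (x * y) ^ m * x = x * ((x * y) ^ m)⁻¹ := by
  have hconj : x * (x * y) * x⁻¹ = (x * y)⁻¹ := by
    rw [mul_inv_rev, inv_eq_of_mul_eq_one_left hy, ← mul_assoc, hx, one_mul]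
  rw [← inv_pow, ← hconj, conj_pow, inv_eq_of_mul_eq_one_left hx, ← mul_assoc, ← mul_assoc, hx,
    one_mul]

lemma commute_iff_mul_sq_eq_one {x y : H} (hx : x * x = 1) (hy : y * y = 1) :
    Commute x y ↔ (x * y) ^ 2 = 1 := by
  refine ⟨fun h => by rw [h.mul_pow, pow_two, pow_two, hx, hy, one_mul], fun h => ?_⟩
  rw [pow_two] at h
  have hx' := inv_eq_of_mul_eq_one_left hx
  have hy' := inv_eq_of_mul_eq_one_left hy
  rw [commute_iff_eq, ← inv_eq_of_mul_eq_one_left h, mul_inv_rev, hx', hy']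

end Involutions

namespace DihedralGroup

variable {n : ℕ} {H : Type*} [Group H]

lemma closure_sr_zero_sr_one :
    Subgroup.closure {sr 0, sr 1} = (⊤ : Subgroup (DihedralGroup n)) := by
  set K := Subgroup.closure ({sr 0, sr 1} : Set (DihedralGroup n))
  have h0 : sr 0 ∈ K := Subgroup.subset_closure (by simp)
  have hr : ∀ k : ZMod n, r k ∈ K := fun k => by
    rw [← ZMod.intCast_zmod_cast k, ← r_one_zpow, ← sub_zero (1 : ZMod n), ← sr_mul_sr]
    exact zpow_mem (mul_mem h0 (Subgroup.subset_closure (by simp))) _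
  refine (Subgroup.eq_top_iff' K).2 ?_
  rintro (k | k)
  · exact hr k
  · rw [← zero_add k, ← sr_mul_r]
    exact mul_mem h0 (hr k)

lemma hom_ext {f g : DihedralGroup n →* H} (h₀ : f (sr 0) = g (sr 0))
    (h₁ : f (sr 1) = g (sr 1)) : f = g :=
  MonoidHom.eq_of_eqOn_dense closure_sr_zero_sr_one (by
    rintro x (rfl | rfl)
    exacts [h₀, h₁])

lemma commute_map_of_commute_sr {f : DihedralGroup n →* H} {z : H}
    (h₀ : Commute (f (sr 0)) z) (h₁ : Commute (f (sr 1)) z) (d : DihedralGroup n) :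
    Commute (f d) z := by
  have : (MulAut.conj z).toMonoidHom.comp f = f :=
    hom_ext (by simp [h₀.symm.eq]) (by simp [h₁.symm.eq])
  have := DFunLike.congr_fun this d
  simp only [MonoidHom.comp_apply, MulEquiv.coe_toMonoidHom, MulAut.conj_apply,
    mul_inv_eq_iff_eq_mul] at this
  exact this.symm

lemma commute_map_map_of_commute_sr {m : ℕ} {f : DihedralGroup n →* H}
    {g : DihedralGroup m →* H}
    (h : ∀ a ∈ ({sr 0, sr 1} : Set (DihedralGroup n)),
      ∀ b ∈ ({sr 0, sr 1} : Set (DihedralGroup m)), Commute (f a) (g b))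
    (x : DihedralGroup n) (y : DihedralGroup m) : Commute (f x) (g y) := by
  refine commute_map_of_commute_sr ?_ ?_ x <;>
    exact (commute_map_of_commute_sr (h _ (by simp) _ (by simp)).symm
      (h _ (by simp) _ (by simp)).symm y).symm

section Lift

variable [NeZero n] (x y : H) (hx : x * x = 1) (hy : y * y = 1) (hxy : (x * y) ^ n = 1)

def lift : DihedralGroup n →* H where
  toFun
    | r k => (x * y) ^ k.val
    | sr k => x * (x * y) ^ k.val
  map_one' := by simp only [one_def, ZMod.val_zero, pow_zero]
  map_mul' := by
    have hadd (k l : ZMod n) : (x * y) ^ (k + l).val = (x * y) ^ k.val * (x * y) ^ l.val := by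
      rw [← pow_add, pow_eq_pow_mod (k.val + l.val) hxy, ZMod.val_add]
    rintro (i | i) (j | j) <;> simp only [r_mul_r, r_mul_sr, sr_mul_r, sr_mul_sr]
    · exact hadd i j
    · conv_rhs => rw [← add_sub_cancel i j, hadd, ← mul_assoc, mul_pow_mul_eq_mul_pow_inv hx hy,
        mul_assoc, inv_mul_cancel_left]
    · rw [hadd, mul_assoc]
    · conv_rhs => rw [← add_sub_cancel i j, hadd, mul_assoc x, ← mul_assoc _ x,
        mul_pow_mul_eq_mul_pow_inv hx hy, mul_assoc x, ← mul_assoc x x, hx, one_mul,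
        inv_mul_cancel_left]

lemma lift_sr_zero : lift x y hx hy hxy (sr 0) = x := by
  simp [lift]

lemma lift_sr_one : lift x y hx hy hxy (sr 1) = y := by
  show x * (x * y) ^ (1 : ZMod n).val = y
  rw [ZMod.val_one_eq_one_mod, ← pow_eq_pow_mod 1 hxy, pow_one, ← mul_assoc, hx, one_mul]

end Lift

def swapRefl : DihedralGroup n ≃* DihedralGroup n where
  toFun
    | r k => r (-k)
    | sr k => sr (1 - k)
  invFun
    | r k => r (-k)
    | sr k => sr (1 - k)
  left_inv := by rintro (k | k) <;> simp
  right_inv := by rintro (k | k) <;> simp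
  map_mul' := by
    rintro (i | i) (j | j) <;> simp only [r_mul_r, r_mul_sr, sr_mul_r, sr_mul_sr] <;> ring_nf

@[simp] lemma swapRefl_sr (k : ZMod n) : swapRefl (sr k) = sr (1 - k) := rfl

@[simp] lemma swapRefl_swapRefl (x : DihedralGroup n) : swapRefl (swapRefl x) = x :=
  swapRefl.symm_apply_apply x

def vertexPerm : DihedralGroup n →* Equiv.Perm (ZMod n) where
  toFun
    | r i => Equiv.subRight i
    | sr j => Equiv.subLeft j
  map_one' := Equiv.ext fun v => sub_zero v
  map_mul' := by
    rintro (i | i) (j | j) <;> ext v <;>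
      simp only [r_mul_r, r_mul_sr, sr_mul_r, sr_mul_sr, Equiv.Perm.coe_mul, Function.comp_apply,
        Equiv.subRight_apply, Equiv.subLeft_apply] <;> ring

@[simp] lemma vertexPerm_r (i v : ZMod n) : vertexPerm (r i) v = v - i := rfl

@[simp] lemma vertexPerm_sr (j v : ZMod n) : vertexPerm (sr j) v = j - v := rfl

/-- `r (-u)`, `d`, `r (vertexPerm d u)` carry `0 ↦ u ↦ vertexPerm d u ↦ 0`, so the product lies
in the stabiliser `{1, sr 0}` of the vertex `0`. -/
lemma r_vertexPerm_mul_mul_r_neg_eq_one_or (d : DihedralGroup n) (u : ZMod n) :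
    r (vertexPerm d u) * d * r (-u) = 1 ∨ r (vertexPerm d u) * d * r (-u) = sr 0 := by
  rcases d with k | k
  · left
    rw [vertexPerm_r, r_mul_r, r_mul_r, one_def]
    ring_nf
  · right
    rw [vertexPerm_sr, r_mul_sr, sr_mul_r]
    ring_nf

end DihedralGroup

section VertexConj

variable {H : Type*} [Group H] {n : ℕ} (χ : DihedralGroup n →* H) (x : H)

/-- `x`, viewed as sitting at the vertex `0`, transported to the vertex `u` by `χ (r (-u))`. -/
def vertexConj (u : ZMod n) : H := (χ (r u))⁻¹ * x * χ (r u)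

lemma vertexConj_zero : vertexConj χ x 0 = x := by
  simp [vertexConj]

variable {χ x}

lemma vertexConj_mul_self (hx : x * x = 1) (u : ZMod n) :
    vertexConj χ x u * vertexConj χ x u = 1 := by
  simp only [vertexConj, mul_assoc, mul_inv_cancel_left]
  rw [← mul_assoc x, hx, one_mul, inv_mul_cancel]

lemma map_vertexConj {K : Type*} [Group K] (f : H →* K) (u : ZMod n) :
    f (vertexConj χ x u) = vertexConj (f.comp χ) (f x) u := by
  simp [vertexConj]

lemma map_mul_vertexConj_mul_inv (hx : Commute x (χ (sr 0))) (d : DihedralGroup n)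
    (u : ZMod n) : χ d * vertexConj χ x u * (χ d)⁻¹ = vertexConj χ x (vertexPerm d u) := by
  have he : χ (r (vertexPerm d u) * d * r (-u)) * x * (χ (r (vertexPerm d u) * d * r (-u)))⁻¹
      = x := by
    rcases r_vertexPerm_mul_mul_r_neg_eq_one_or d u with h | h <;> rw [h]
    · simp
    · rw [← hx.eq, mul_inv_cancel_right]
  calc χ d * vertexConj χ x u * (χ d)⁻¹
      = (χ (r (vertexPerm d u)))⁻¹ * (χ (r (vertexPerm d u) * d * r (-u)) * x
          * (χ (r (vertexPerm d u) * d * r (-u)))⁻¹) * χ (r (vertexPerm d u)) := by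
        simp only [vertexConj, map_mul, ← inv_r, map_inv]
        group
    _ = vertexConj χ x (vertexPerm d u) := by rw [he, vertexConj]

lemma mul_map_sr_sq (hx : Commute x (χ (sr 0))) (j : ZMod n) :
    (x * χ (sr j)) ^ 2 = x * vertexConj χ x j := by
  have h := map_mul_vertexConj_mul_inv hx (sr j) 0
  rw [vertexPerm_sr, sub_zero, vertexConj_zero, ← map_inv, inv_sr] at h
  rw [pow_two, ← h, mul_assoc, mul_assoc]

lemma mul_map_sr_one_mul_pow (j : ℕ) (hj : 1 ≤ j) :
    x * χ (sr 1) * (χ (sr 0) * χ (sr 1)) ^ (j - 1) = x * χ (sr j) := by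
  rw [← map_mul, sr_mul_sr, sub_zero, ← map_pow, r_one_pow, mul_assoc, ← map_mul, sr_mul_r,
    Nat.cast_sub hj, Nat.cast_one, add_sub_cancel]

end VertexConj

section Antipodal

variable {p : ℕ}

lemma natCast_add_natCast_self : (p : ZMod (2 * p)) + p = 0 := by
  have h := ZMod.natCast_self (2 * p)
  push_cast at h
  linear_combination h

lemma add_natCast_add_natCast (v : ZMod (2 * p)) : v + p + p = v := by
  rw [add_assoc, natCast_add_natCast_self, add_zero]

lemma vertexPerm_add_natCast (d : DihedralGroup (2 * p)) (v : ZMod (2 * p)) :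
    vertexPerm d (v + p) = vertexPerm d v + p := by
  rcases d with k | k
  · simp only [vertexPerm_r]
    ring
  · simp only [vertexPerm_sr]
    linear_combination (-1 : ZMod (2 * p)) * natCast_add_natCast_self (p := p)

variable [NeZero p]

lemma natCast_ne_zero_zmod_two_mul : (p : ZMod (2 * p)) ≠ 0 := by
  intro h
  have := Nat.le_of_dvd (Nat.pos_of_neZero p) ((ZMod.natCast_eq_zero_iff _ _).1 h)
  have := NeZero.ne p
  omega

lemma add_natCast_ne_self (v : ZMod (2 * p)) : v + p ≠ v := by
  simpa using natCast_ne_zero_zmod_two_mul (p := p)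

/-- The index of the antipodal pair `{v, v + p}` containing the vertex `v`. -/
def pairIndex (v : ZMod (2 * p)) : Fin p :=
  ⟨(ZMod.castHom (dvd_mul_left p 2) (ZMod p) v).val, ZMod.val_lt _⟩

lemma pairIndex_natCast (i : Fin p) : pairIndex ((i : ℕ) : ZMod (2 * p)) = i :=
  Fin.ext (by simp [pairIndex, ZMod.val_natCast_of_lt i.isLt])

lemma pairIndex_natCast_of_lt {j : ℕ} (hj : j < p) :
    pairIndex (j : ZMod (2 * p)) = ⟨j, hj⟩ :=
  pairIndex_natCast ⟨j, hj⟩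

lemma pairIndex_add_natCast (v : ZMod (2 * p)) :
    pairIndex (v + p : ZMod (2 * p)) = pairIndex v := by
  simp [pairIndex]

lemma pairIndex_eq_iff {u w : ZMod (2 * p)} :
    pairIndex u = pairIndex w ↔ w = u ∨ w = u + p := by
  refine ⟨fun h => ?_, by rintro (rfl | rfl) <;> simp [pairIndex_add_natCast]⟩
  have hcast : ZMod.castHom (dvd_mul_left p 2) (ZMod p) (w - u) = 0 := by
    rw [map_sub, sub_eq_zero]
    exact (ZMod.val_injective _ (Fin.ext_iff.1 h)).symm
  obtain ⟨k, hk⟩ : p ∣ (w - u).val := by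
    rwa [← ZMod.natCast_eq_zero_iff, ← ZMod.cast_eq_val, ← ZMod.castHom_apply]
  have hk2 : k < 2 := by
    have := (w - u).val_lt
    nlinarith [Nat.pos_of_neZero p]
  have hwu : w - u = ((p * k : ℕ) : ZMod (2 * p)) := by rw [← hk, ZMod.natCast_zmod_val]
  interval_cases k
  · left; simpa [sub_eq_zero] using hwu
  · right; simpa [sub_eq_iff_eq_add'] using hwu

lemma eq_natCast_pairIndex_or (v : ZMod (2 * p)) :
    v = (pairIndex v : ℕ) ∨ v = (pairIndex v : ℕ) + p :=
  pairIndex_eq_iff.1 (pairIndex_natCast _)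

lemma exists_vertexPerm_zero_eq {u w : ZMod (2 * p)} (h : pairIndex u ≠ pairIndex w) :
    ∃ (d : DihedralGroup (2 * p)) (j : ℕ), 1 ≤ j ∧ j ≤ p - 1 ∧
      vertexPerm d 0 = u ∧ vertexPerm d j = w := by
  have hne : ¬ (w = u ∨ w = u + p) := fun h' => h (pairIndex_eq_iff.2 h')
  set c := pairIndex (w - u)
  have hc := c.isLt
  rcases eq_natCast_pairIndex_or (w - u) with h' | h'
  · have hc0 : (c : ℕ) ≠ 0 := fun hc0 => hne (.inl (by
      rw [hc0, Nat.cast_zero] at h'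
      linear_combination h'))
    refine ⟨r (-u), c, by omega, by omega, by simp, ?_⟩
    rw [vertexPerm_r, ← h']
    ring
  · have hc0 : (c : ℕ) ≠ 0 := fun hc0 => hne (.inr (by
      rw [hc0, Nat.cast_zero] at h'
      linear_combination h'))
    refine ⟨sr u, p - c, by omega, by omega, by simp, ?_⟩
    rw [vertexPerm_sr, Nat.cast_sub hc.le]
    linear_combination -h' - natCast_add_natCast_self (p := p)

end Antipodal

section Twisted

variable {p s : ℕ}

lemma add_natCast_eq_iff {u v : ZMod (2 * p)} : v + p = u ↔ v = u + p := by
  constructor <;> rintro rfl <;> simp [add_natCast_add_natCast]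

def antipodalSingle (u : ZMod (2 * p)) (x : DihedralGroup s) : ZMod (2 * p) → DihedralGroup s :=
  Pi.mulSingle u x * Pi.mulSingle (u + p) (swapRefl x)

lemma antipodalSingle_comp_vertexPerm (d : DihedralGroup (2 * p)) (u : ZMod (2 * p))
    (x : DihedralGroup s) :
    antipodalSingle u x ∘ vertexPerm d⁻¹ = antipodalSingle (vertexPerm d u) x := by
  rw [antipodalSingle, antipodalSingle, Pi.mul_comp, map_inv, Equiv.Perm.inv_def,
    Pi.mulSingle_comp_equiv, Pi.mulSingle_comp_equiv, Equiv.symm_symm, vertexPerm_add_natCast]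

variable [NeZero p]

/-- Extends `f` from the vertices `0, …, p - 1` to all `2p` vertices, twisting by `swapRefl`
at the antipode. -/
def twistedExtend : (Fin p → DihedralGroup s) →* (ZMod (2 * p) → DihedralGroup s) where
  toFun f v := if v = (pairIndex v : ℕ) then f (pairIndex v) else swapRefl (f (pairIndex v))
  map_one' := by
    ext v
    simp only [Pi.one_apply, map_one, ite_self]
  map_mul' f g := by
    ext v
    simp only [Pi.mul_apply]
    split_ifs <;> simp only [map_mul]

lemma twistedExtend_natCast (f : Fin p → DihedralGroup s) (i : Fin p) :
    twistedExtend f (i : ℕ) = f i := by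
  simp [twistedExtend, pairIndex_natCast]

lemma twistedExtend_add_natCast (f : Fin p → DihedralGroup s) (v : ZMod (2 * p)) :
    twistedExtend f (v + p) = swapRefl (twistedExtend f v) := by
  simp only [twistedExtend, MonoidHom.coe_mk, OneHom.coe_mk, pairIndex_add_natCast]
  rcases eq_natCast_pairIndex_or v with h | h
  · rw [if_pos h, if_neg fun e => add_natCast_ne_self v (e.trans h.symm)]
  · have h' : v + p = (pairIndex v : ℕ) := add_natCast_eq_iff.2 h
    rw [if_pos h', if_neg fun e => add_natCast_ne_self v (h'.trans e.symm), swapRefl_swapRefl]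

lemma twistedExtend_injective : Function.Injective ⇑(twistedExtend (p := p) (s := s)) :=
  fun f g h => funext fun i => by
    rw [← twistedExtend_natCast f, ← twistedExtend_natCast g, h]

lemma twistedExtend_eq_of_natCast {f : Fin p → DihedralGroup s}
    {F : ZMod (2 * p) → DihedralGroup s} (hF : ∀ v, F (v + p) = swapRefl (F v))
    (hf : ∀ i : Fin p, f i = F (i : ℕ)) :
    twistedExtend f = F := by
  funext v
  rcases eq_natCast_pairIndex_or v with h | h <;> rw [h]
  · rw [twistedExtend_natCast, hf]
  · rw [twistedExtend_add_natCast, hF, twistedExtend_natCast, hf]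

def twistedAct (d : DihedralGroup (2 * p)) (f : Fin p → DihedralGroup s) :
    Fin p → DihedralGroup s :=
  fun i => twistedExtend f (vertexPerm d⁻¹ (i : ℕ))

lemma twistedExtend_twistedAct (d : DihedralGroup (2 * p)) (f : Fin p → DihedralGroup s) :
    twistedExtend (twistedAct d f) = twistedExtend f ∘ vertexPerm d⁻¹ :=
  twistedExtend_eq_of_natCast
    (fun v => by simp only [Function.comp_apply, vertexPerm_add_natCast, twistedExtend_add_natCast])
    (fun _ => rfl)

lemma twistedAct_mul (d e : DihedralGroup (2 * p)) (f : Fin p → DihedralGroup s) :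
    twistedAct (d * e) f = twistedAct d (twistedAct e f) := by
  funext i
  simp [twistedAct, twistedExtend_twistedAct]

lemma twistedAct_one (f : Fin p → DihedralGroup s) : twistedAct 1 f = f := by
  funext i
  simp [twistedAct, twistedExtend_natCast]

variable (p s) in
/-- `D_{2p}` acting on `D_s^p`: it permutes the `2p` vertices, and a factor carried across the
antipodal identification is twisted by `swapRefl`. -/
def twistedAction : DihedralGroup (2 * p) →* MulAut (Fin p → DihedralGroup s) where
  toFun d :=
    { toFun := twistedAct d
      invFun := twistedAct d⁻¹
      left_inv f := by rw [← twistedAct_mul, inv_mul_cancel, twistedAct_one]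
      right_inv f := by rw [← twistedAct_mul, mul_inv_cancel, twistedAct_one]
      map_mul' f g := funext fun i => by simp [twistedAct] }
  map_one' := MulEquiv.ext twistedAct_one
  map_mul' d e := MulEquiv.ext (twistedAct_mul d e)

lemma twistedAction_apply (d : DihedralGroup (2 * p)) (f : Fin p → DihedralGroup s) :
    twistedAction p s d f = twistedAct d f := rfl

lemma antipodalSingle_add_natCast (u : ZMod (2 * p)) (x : DihedralGroup s) (v : ZMod (2 * p)) :
    antipodalSingle u x (v + p) = swapRefl (antipodalSingle u x v) := by
  simp only [antipodalSingle, Pi.mul_apply, Pi.mulSingle_apply, add_natCast_eq_iff, add_left_inj]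
  split_ifs <;> simp_all [natCast_ne_zero_zmod_two_mul]

lemma antipodalSingle_mul (u : ZMod (2 * p)) (x y : DihedralGroup s) :
    antipodalSingle u (x * y) = antipodalSingle u x * antipodalSingle u y := by
  funext v
  simp only [antipodalSingle, Pi.mul_apply, Pi.mulSingle_apply]
  split_ifs <;> simp_all [natCast_ne_zero_zmod_two_mul]

lemma antipodalSingle_add_natCast_left (u : ZMod (2 * p)) (x : DihedralGroup s) :
    antipodalSingle (u + p : ZMod (2 * p)) x = antipodalSingle u (swapRefl x) := by
  rw [antipodalSingle, antipodalSingle, add_natCast_add_natCast, swapRefl_swapRefl]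
  exact (Pi.mulSingle_commute (add_natCast_ne_self u) _ _).eq

/-- `x` placed at the vertex `u`: in coordinate `u` if `u < p`, and as `swapRefl x` in
coordinate `u - p` otherwise. -/
def vertexSingle (u : ZMod (2 * p)) : DihedralGroup s →* (Fin p → DihedralGroup s) where
  toFun x i := antipodalSingle u x (i : ℕ)
  map_one' := funext fun i => by simp [antipodalSingle]
  map_mul' x y := funext fun i => by simp [antipodalSingle_mul]

lemma twistedExtend_vertexSingle (u : ZMod (2 * p)) (x : DihedralGroup s) :
    twistedExtend (vertexSingle u x) = antipodalSingle u x :=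
  twistedExtend_eq_of_natCast (antipodalSingle_add_natCast u x) fun _ => rfl

lemma vertexSingle_natCast (i : Fin p) (x : DihedralGroup s) :
    vertexSingle (i : ℕ) x = Pi.mulSingle i x := by
  funext j
  have hinj : ((j : ℕ) : ZMod (2 * p)) = (i : ℕ) ↔ j = i :=
    ⟨fun h => by simpa [pairIndex_natCast] using congrArg pairIndex h, by rintro rfl; rfl⟩
  have hne : ((j : ℕ) : ZMod (2 * p)) ≠ (i : ℕ) + p := fun h => by
    obtain rfl : j = i := by
      simpa [pairIndex_natCast, pairIndex_add_natCast] using congrArg pairIndex h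
    exact add_natCast_ne_self _ h.symm
  simp [vertexSingle, antipodalSingle, Pi.mulSingle_apply, hinj, hne]

lemma vertexSingle_add_natCast (u : ZMod (2 * p)) (x : DihedralGroup s) :
    vertexSingle (u + p : ZMod (2 * p)) x = vertexSingle u (swapRefl x) :=
  funext fun i => by simp [vertexSingle, antipodalSingle_add_natCast_left]

lemma twistedAction_vertexSingle (d : DihedralGroup (2 * p)) (u : ZMod (2 * p))
    (x : DihedralGroup s) :
    twistedAction p s d (vertexSingle u x) = vertexSingle (vertexPerm d u) x :=
  funext fun i => by
    rw [twistedAction_apply, twistedAct, twistedExtend_vertexSingle]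
    show _ = antipodalSingle (vertexPerm d u) x _
    rw [← antipodalSingle_comp_vertexPerm]
    rfl

lemma commute_vertexSingle {u w : ZMod (2 * p)} (h : pairIndex u ≠ pairIndex w)
    (x y : DihedralGroup s) : Commute (vertexSingle u x) (vertexSingle w y) := by
  refine Commute.of_map (f := twistedExtend) twistedExtend_injective ?_
  rw [twistedExtend_vertexSingle, twistedExtend_vertexSingle, antipodalSingle, antipodalSingle]
  have hne {a b : ZMod (2 * p)} (hab : pairIndex a ≠ pairIndex b) : a ≠ b :=
    fun e => hab (congrArg pairIndex e)
  have h' : pairIndex (u + p : ZMod (2 * p)) ≠ pairIndex w := by rwa [pairIndex_add_natCast]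
  have h'' {a : ZMod (2 * p)} (ha : pairIndex a ≠ pairIndex w) :
      pairIndex a ≠ pairIndex (w + p : ZMod (2 * p)) := by rwa [pairIndex_add_natCast]
  exact ((Pi.mulSingle_commute (hne h) _ _).mul_right
    (Pi.mulSingle_commute (hne (h'' h)) _ _)).mul_left
    ((Pi.mulSingle_commute (hne h') _ _).mul_right (Pi.mulSingle_commute (hne (h'' h')) _ _))

lemma hom_ext_vertexSingle {H : Type*} [Group H] {f g : (Fin p → DihedralGroup s) →* H}
    (h : ∀ u, f (vertexSingle u (sr 0)) = g (vertexSingle u (sr 0))) : f = g :=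
  MonoidHom.pi_ext fun i x => DFunLike.congr_fun
    (DihedralGroup.hom_ext (f := f.comp (MonoidHom.mulSingle (fun _ => DihedralGroup s) i))
      (g := g.comp (MonoidHom.mulSingle (fun _ => DihedralGroup s) i))
      (by simpa [vertexSingle_natCast] using h i)
      (by simpa [vertexSingle_add_natCast, vertexSingle_natCast] using h ((i : ℕ) + p))) x

end Twisted

section Relators

variable {p s : ℕ} {H : Type*} [Group H]

lemma lift_relsStmt11_eq_one_iff (f : Fin 3 → H) :
    (∀ w ∈ relsStmt11 p s, FreeGroup.lift f w = 1) ↔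
      f 0 ^ 2 = 1 ∧ f 1 ^ 2 = 1 ∧ f 2 ^ 2 = 1 ∧ (f 0 * f 1) ^ 4 = 1 ∧ (f 1 * f 2) ^ (2 * p) = 1 ∧
      (f 0 * f 2) ^ 2 = 1 ∧ (f 0 * f 1 * (f 2 * f 1) ^ (p - 1)) ^ (2 * s) = 1 ∧
      ∀ j, 2 ≤ j → j ≤ p - 1 → (f 0 * f 1 * (f 2 * f 1) ^ (j - 1)) ^ 4 = 1 := by
  simp only [relsStmt11, Set.mem_union, Set.mem_insert_iff, Set.mem_singleton_iff, or_imp,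
    forall_and, forall_eq, Set.forall_mem_image, Set.mem_ofPred_eq, and_imp, map_pow, map_mul,
    FreeGroup.lift_apply_of, and_assoc]

variable [NeZero p]

/-- Here `ρ₀ρ₁(ρ₂ρ₁)^{j-1}` maps to `x * χ (sr j)`, whose square is `x * vertexConj χ x j`, so the
relators become relations between `x` and its copies at the other vertices. -/
lemma lift_relsStmt11_eq_one_iff_of_dihedral (χ : DihedralGroup (2 * p) →* H) {x : H}
    (hx : x * x = 1) (hxc : Commute x (χ (sr 0))) :
    (∀ w ∈ relsStmt11 p s, FreeGroup.lift ![x, χ (sr 1), χ (sr 0)] w = 1) ↔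
      Commute x (vertexConj χ x 1) ∧
      (∀ j : ℕ, 2 ≤ j → j ≤ p - 1 → Commute x (vertexConj χ x j)) ∧
      (x * vertexConj χ x p) ^ s = 1 := by
  have hsq (j : ℕ) (hj : 1 ≤ j) :
      (x * χ (sr 1) * (χ (sr 0) * χ (sr 1)) ^ (j - 1)) ^ 2 = x * vertexConj χ x j := by
    rw [mul_map_sr_one_mul_pow j hj, mul_map_sr_sq hxc]
  have hc (j : ZMod (2 * p)) := commute_iff_mul_sq_eq_one hx (vertexConj_mul_self (χ := χ) hx j)
  have hsr (k : ZMod (2 * p)) : χ (sr k) ^ 2 = 1 := by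
    rw [← map_pow, pow_two, sr_mul_self, map_one]
  have hrot : (χ (sr 1) * χ (sr 0)) ^ (2 * p) = 1 := by
    rw [← map_mul, ← map_pow, sr_mul_sr, r_pow, ZMod.natCast_self, mul_zero, ← one_def, map_one]
  have h1 : (x * χ (sr 1)) ^ 4 = (x * vertexConj χ x 1) ^ 2 := by
    rw [show 4 = 2 * 2 from rfl, pow_mul, mul_map_sr_sq hxc]
  have hp0 := Nat.pos_of_neZero p
  rw [lift_relsStmt11_eq_one_iff]
  simp only [Matrix.cons_val_zero, Matrix.cons_val_one, Matrix.cons_val_two, Matrix.head_cons,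
    Matrix.tail_cons]
  constructor
  · rintro ⟨-, -, -, h4, -, -, h2s, hj⟩
    refine ⟨(hc 1).2 (h1 ▸ h4), fun j hj2 hjp => (hc j).2 ?_, ?_⟩
    · rw [← hsq j (by omega), ← pow_mul]
      exact hj j hj2 hjp
    · rw [← hsq p hp0, ← pow_mul]
      exact h2s
  · rintro ⟨h1', hj', hs'⟩
    refine ⟨by rw [pow_two, hx], hsr 1, hsr 0, h1 ▸ (hc 1).1 h1', hrot,
      (commute_iff_mul_sq_eq_one hx (by rw [← pow_two, hsr])).1 hxc, ?_, fun j hj2 hjp => ?_⟩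
    · rw [pow_mul, hsq p hp0]
      exact hs'
    · rw [show 4 = 2 * 2 from rfl, pow_mul, hsq j (by omega)]
      exact (hc j).1 (hj' j hj2 hjp)

end Relators

section Forward

open SemidirectProduct

variable {p s : ℕ} [NeZero p]

lemma vertexConj_inr_inl_vertexSingle (u : ZMod (2 * p)) :
    vertexConj (inr : DihedralGroup (2 * p) →* (Fin p → DihedralGroup s) ⋊[twistedAction p s] _)
      (inl (vertexSingle 0 (sr 0))) u = inl (vertexSingle u (sr 0)) := by
  rw [vertexConj, ← map_inv, ← inl_aut_inv, ← map_inv, twistedAction_vertexSingle]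
  simp

lemma commute_inl_vertexSingle_inr_sr_zero :
    Commute (inl (vertexSingle 0 (sr 0)) : (Fin p → DihedralGroup s) ⋊[twistedAction p s] _)
      (inr (sr 0)) := by
  have h := inl_aut (φ := twistedAction p s) (sr 0) (vertexSingle 0 (sr 0))
  rw [twistedAction_vertexSingle, vertexPerm_sr, sub_zero, map_inv, eq_mul_inv_iff_mul_eq] at h
  exact h

lemma commute_vertexSingle_zero_natCast {j : ℕ} (hj : 1 ≤ j) (hjp : j < p) :
    Commute (vertexSingle 0 (sr 0) : Fin p → DihedralGroup s)
      (vertexSingle (j : ZMod (2 * p)) (sr 0)) := by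
  refine commute_vertexSingle ?_ _ _
  rw [← Nat.cast_zero, pairIndex_natCast_of_lt (Nat.pos_of_neZero p), pairIndex_natCast_of_lt hjp,
    Ne, Fin.mk.injEq]
  omega

lemma vertexSingle_zero_mul_vertexSingle_natCast_pow :
    (vertexSingle 0 (sr 0) * vertexSingle (p : ZMod (2 * p)) (sr 0) : Fin p → DihedralGroup s) ^ s
      = 1 := by
  rw [← zero_add (p : ZMod (2 * p)), vertexSingle_add_natCast, swapRefl_sr, sub_zero, ← map_mul,
    ← map_pow, sr_mul_sr, sub_zero, r_one_pow_n, map_one]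

variable (p s) in
def toSemidirect (hp : 2 ≤ p) :
    PresentedGroup (relsStmt11 p s) →*
      (Fin p → DihedralGroup s) ⋊[twistedAction p s] DihedralGroup (2 * p) :=
  PresentedGroup.toGroup <|
    (lift_relsStmt11_eq_one_iff_of_dihedral inr
      (by rw [← map_mul, ← map_mul, sr_mul_self, map_one, map_one])
      commute_inl_vertexSingle_inr_sr_zero).2 <| by
    simp only [vertexConj_inr_inl_vertexSingle, ← map_mul, ← map_pow,
      vertexSingle_zero_mul_vertexSingle_natCast_pow, map_one, and_true]
    exact ⟨by simpa using (commute_vertexSingle_zero_natCast le_rfl hp).map inl,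
      fun j hj hjp => (commute_vertexSingle_zero_natCast (by omega) (by omega)).map inl⟩

lemma toSemidirect_of_zero (hp : 2 ≤ p) :
    toSemidirect p s hp (.of 0) = inl (vertexSingle 0 (sr 0)) :=
  PresentedGroup.toGroup.of _

lemma toSemidirect_of_one (hp : 2 ≤ p) : toSemidirect p s hp (.of 1) = inr (sr 1) :=
  PresentedGroup.toGroup.of _

lemma toSemidirect_of_two (hp : 2 ≤ p) : toSemidirect p s hp (.of 2) = inr (sr 0) :=
  PresentedGroup.toGroup.of _

end Forward

section Presented

open PresentedGroup

variable (p s : ℕ)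

lemma lift_of_relsStmt11_eq_one :
    ∀ w ∈ relsStmt11 p s, FreeGroup.lift (of (rels := relsStmt11 p s)) w = 1 := by
  have : FreeGroup.lift (of (rels := relsStmt11 p s)) = mk _ :=
    FreeGroup.ext_hom _ _ fun _ => by simp [of]
  intro w hw
  rw [this]
  exact one_of_mem hw

variable {p s}

lemma of_mul_self (i : Fin 3) : (of i : PresentedGroup (relsStmt11 p s)) * of i = 1 := by
  obtain ⟨h0, h1, h2, -⟩ := (lift_relsStmt11_eq_one_iff _).1 (lift_of_relsStmt11_eq_one p s)
  rw [← pow_two]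
  fin_cases i
  exacts [h0, h1, h2]

lemma of_two_mul_of_one_pow :
    (of 2 * of 1 : PresentedGroup (relsStmt11 p s)) ^ (2 * p) = 1 := by
  obtain ⟨-, -, -, -, h, -⟩ := (lift_relsStmt11_eq_one_iff _).1 (lift_of_relsStmt11_eq_one p s)
  rw [← inv_eq_of_mul_eq_one_left (of_mul_self 1), ← inv_eq_of_mul_eq_one_left (of_mul_self 2),
    ← mul_inv_rev, inv_pow, h, inv_one]

lemma commute_of_zero_of_two : Commute (of 0 : PresentedGroup (relsStmt11 p s)) (of 2) := by
  obtain ⟨-, -, -, -, -, h, -⟩ := (lift_relsStmt11_eq_one_iff _).1 (lift_of_relsStmt11_eq_one p s)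
  exact (commute_iff_mul_sq_eq_one (of_mul_self 0) (of_mul_self 2)).2 h

variable [NeZero p]

variable (p s) in
def presentedDihedral : DihedralGroup (2 * p) →* PresentedGroup (relsStmt11 p s) :=
  DihedralGroup.lift (of 2) (of 1) (of_mul_self 2) (of_mul_self 1) of_two_mul_of_one_pow

lemma presentedDihedral_sr_zero : presentedDihedral p s (sr 0) = of 2 := lift_sr_zero _ _ _ _ _

lemma presentedDihedral_sr_one : presentedDihedral p s (sr 1) = of 1 := lift_sr_one _ _ _ _ _

lemma commute_of_zero_presentedDihedral_sr_zero :
    Commute (of 0) (presentedDihedral p s (sr 0)) := by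
  rw [presentedDihedral_sr_zero]
  exact commute_of_zero_of_two

variable (p s) in
def presentedVertexRefl (u : ZMod (2 * p)) : PresentedGroup (relsStmt11 p s) :=
  vertexConj (presentedDihedral p s) (of 0) u

lemma presentedVertexRefl_zero : presentedVertexRefl p s 0 = of 0 := vertexConj_zero _ _

lemma presentedVertexRefl_mul_self (u : ZMod (2 * p)) :
    presentedVertexRefl p s u * presentedVertexRefl p s u = 1 :=
  vertexConj_mul_self (of_mul_self 0) u

lemma presentedDihedral_mul_presentedVertexRefl_mul_inv (d : DihedralGroup (2 * p))
    (u : ZMod (2 * p)) :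
    presentedDihedral p s d * presentedVertexRefl p s u * (presentedDihedral p s d)⁻¹ =
      presentedVertexRefl p s (vertexPerm d u) :=
  map_mul_vertexConj_mul_inv commute_of_zero_presentedDihedral_sr_zero d u

lemma presentedVertexRefl_relations :
    Commute (of 0) (presentedVertexRefl p s 1) ∧
      (∀ j : ℕ, 2 ≤ j → j ≤ p - 1 → Commute (of 0) (presentedVertexRefl p s j)) ∧
      (of 0 * presentedVertexRefl p s p) ^ s = 1 := by
  refine (lift_relsStmt11_eq_one_iff_of_dihedral _ (of_mul_self 0)
    commute_of_zero_presentedDihedral_sr_zero).1 ?_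
  convert lift_of_relsStmt11_eq_one p s
  funext i
  fin_cases i <;> simp [presentedDihedral_sr_zero, presentedDihedral_sr_one]

lemma commute_of_zero_presentedVertexRefl {j : ℕ} (hj1 : 1 ≤ j) (hjp : j ≤ p - 1) :
    Commute (of 0) (presentedVertexRefl p s j) := by
  rcases hj1.eq_or_lt with rfl | hj2
  · simpa using presentedVertexRefl_relations.1
  · exact presentedVertexRefl_relations.2.1 j hj2 hjp

lemma of_zero_mul_presentedVertexRefl_pow : (of 0 * presentedVertexRefl p s p) ^ s = 1 :=
  presentedVertexRefl_relations.2.2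

lemma commute_presentedVertexRefl {u w : ZMod (2 * p)} (h : pairIndex u ≠ pairIndex w) :
    Commute (presentedVertexRefl p s u) (presentedVertexRefl p s w) := by
  obtain ⟨d, j, hj1, hjp, rfl, rfl⟩ := exists_vertexPerm_zero_eq h
  have hc : Commute (presentedVertexRefl p s 0) (presentedVertexRefl p s j) := by
    rw [presentedVertexRefl_zero]
    exact commute_of_zero_presentedVertexRefl hj1 hjp
  simpa only [MulAut.conj_apply, presentedDihedral_mul_presentedVertexRefl_mul_inv]
    using hc.map (MulAut.conj (presentedDihedral p s d))

lemma presentedVertexRefl_mul_add_natCast_pow (u : ZMod (2 * p)) :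
    (presentedVertexRefl p s u * presentedVertexRefl p s (u + p)) ^ s = 1 := by
  have h := congrArg (MulAut.conj (presentedDihedral p s (r (-u))))
    of_zero_mul_presentedVertexRefl_pow
  rw [← presentedVertexRefl_zero] at h
  simp only [map_pow, map_mul, map_one, MulAut.conj_apply,
    presentedDihedral_mul_presentedVertexRefl_mul_inv, vertexPerm_r, sub_neg_eq_add, zero_add] at h
  rwa [add_comm] at h

end Presented

section Backward

open PresentedGroup SemidirectProduct

variable {p s : ℕ} [NeZero p] [NeZero s]

variable (p s) in
def presentedFactor (i : Fin p) : DihedralGroup s →* PresentedGroup (relsStmt11 p s) :=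
  DihedralGroup.lift (presentedVertexRefl p s (i : ℕ)) (presentedVertexRefl p s ((i : ℕ) + p))
    (presentedVertexRefl_mul_self _) (presentedVertexRefl_mul_self _)
    (presentedVertexRefl_mul_add_natCast_pow _)

lemma commute_presentedFactor :
    Pairwise fun i j => ∀ x y, Commute (presentedFactor p s i x) (presentedFactor p s j y) := by
  intro i j hij x y
  refine DihedralGroup.commute_map_map_of_commute_sr (fun a ha b hb => ?_) x y
  simp only [Set.mem_insert_iff, Set.mem_singleton_iff] at ha hb
  rcases ha with rfl | rfl <;> rcases hb with rfl | rfl <;>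
    simp only [presentedFactor, lift_sr_zero, lift_sr_one] <;>
    exact commute_presentedVertexRefl
      (by simpa [pairIndex_natCast, pairIndex_add_natCast] using hij)

variable (p s) in
def ofSemidirectLeft : (Fin p → DihedralGroup s) →* PresentedGroup (relsStmt11 p s) :=
  MonoidHom.noncommPiCoprod (presentedFactor p s) commute_presentedFactor

lemma ofSemidirectLeft_vertexSingle (u : ZMod (2 * p)) :
    ofSemidirectLeft p s (vertexSingle u (sr 0)) = presentedVertexRefl p s u := by
  obtain ⟨i, rfl | rfl⟩ : ∃ i : Fin p, u = (i : ℕ) ∨ u = (i : ℕ) + p :=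
    ⟨_, eq_natCast_pairIndex_or u⟩
  · rw [vertexSingle_natCast, ofSemidirectLeft, MonoidHom.noncommPiCoprod_mulSingle,
      presentedFactor, lift_sr_zero]
  · rw [vertexSingle_add_natCast, swapRefl_sr, sub_zero, vertexSingle_natCast, ofSemidirectLeft,
      MonoidHom.noncommPiCoprod_mulSingle, presentedFactor, lift_sr_one]

variable (p s) in
def ofSemidirect :
    (Fin p → DihedralGroup s) ⋊[twistedAction p s] DihedralGroup (2 * p) →*
      PresentedGroup (relsStmt11 p s) :=
  SemidirectProduct.lift (ofSemidirectLeft p s) (presentedDihedral p s) fun d =>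
    hom_ext_vertexSingle fun u => by
      simp [twistedAction_vertexSingle, ofSemidirectLeft_vertexSingle,
        presentedDihedral_mul_presentedVertexRefl_mul_inv]

lemma ofSemidirect_comp_toSemidirect (hp : 2 ≤ p) :
    (ofSemidirect p s).comp (toSemidirect p s hp) = MonoidHom.id _ :=
  PresentedGroup.ext fun i => by
    fin_cases i <;> simp [toSemidirect_of_zero, toSemidirect_of_one, toSemidirect_of_two,
      ofSemidirect, ofSemidirectLeft_vertexSingle, presentedVertexRefl_zero,
      presentedDihedral_sr_zero, presentedDihedral_sr_one]

lemma toSemidirect_comp_ofSemidirect (hp : 2 ≤ p) :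
    (toSemidirect p s hp).comp (ofSemidirect p s) = MonoidHom.id _ := by
  have hρ : (toSemidirect p s hp).comp (presentedDihedral p s) = inr :=
    DihedralGroup.hom_ext
      (by rw [MonoidHom.comp_apply, presentedDihedral_sr_zero, toSemidirect_of_two])
      (by rw [MonoidHom.comp_apply, presentedDihedral_sr_one, toSemidirect_of_one])
  refine SemidirectProduct.hom_ext (hom_ext_vertexSingle fun u => ?_) ?_
  · rw [MonoidHom.comp_apply, MonoidHom.comp_apply, MonoidHom.comp_apply, ofSemidirect, lift_inl,
      ofSemidirectLeft_vertexSingle, presentedVertexRefl, map_vertexConj, hρ, toSemidirect_of_zero,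
      vertexConj_inr_inl_vertexSingle, MonoidHom.id_apply]
  · rw [MonoidHom.comp_assoc, ofSemidirect, lift_comp_inr, hρ, MonoidHom.id_comp]

end Backward

/-- The group `[4, 2p | 4^{p-2}, 2s]` is isomorphic to `D_s^p ⋊ D_{2p}` and has order
`(2s)^p · 4p`. -/
theorem stmt11 (p s : ℕ) (hp : 2 ≤ p) (hs : 2 ≤ s) :
    (∃ φ : DihedralGroup (2 * p) →* MulAut (Fin p → DihedralGroup s),
      Nonempty (PresentedGroup (relsStmt11 p s) ≃*
        (Fin p → DihedralGroup s) ⋊[φ] DihedralGroup (2 * p))) ∧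
    Nat.card (PresentedGroup (relsStmt11 p s)) = (2 * s) ^ p * (4 * p) := by
  have : NeZero p := ⟨by omega⟩
  have : NeZero s := ⟨by omega⟩
  let e := (toSemidirect p s hp).toMulEquiv (ofSemidirect p s) (ofSemidirect_comp_toSemidirect hp)
    (toSemidirect_comp_ofSemidirect hp)
  refine ⟨⟨twistedAction p s, ⟨e⟩⟩, ?_⟩
  rw [Nat.card_congr e.toEquiv, SemidirectProduct.card, Nat.card_pi, DihedralGroup.nat_card,
    DihedralGroup.nat_card, Finset.prod_const, Finset.card_univ, Fintype.card_fin]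
  ring
end
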